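/- arXiv:1410.3048 — 6 statements merged into one kernel-verified Lean document; each statement's English description precedes it below -/
import Mathlib

section
/- Consider a two-slot, three-bidder setting with click-through-rates α_{i,j} > 0 (α_{i,1} ≥ α_{i,2}) and values v_i ≥ 0, where bidder 1 wins slot 1 and bidder 2 wins slot 2 in the efficient allocation. If there exist nonnegative bids b_1, b_2, b_3 (with bidder 1 winning slot 1 at price max(α_{2,1}b_2, α_{3,1}b_3), bidder 2 winning slot 2 at price α_{3,2}b_3) yielding a globally envy-free outcome, then (α_{3,1} − α_{3,2})·v_3 ≤ (α_{1,1} − α_{1,2})·v_1. -/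
/-- In a two-slot, three-bidder setting, a globally envy-free outcome
(bidder 1 in slot 1 at price max(α21·b2, α31·b3), bidder 2 in slot 2 at price α32·b3,
bidder 3 unallocated) forces (α31 - α32)·v3 ≤ (α11 - α12)·v1. -/
theorem stmt3 (a11 a12 a21 a22 a31 a32 v1 v2 v3 b1 b2 b3 p1 p2 : ℝ)
    (h1pos : 0 < a12) (h1dec : a12 ≤ a11)
    (h2pos : 0 < a22) (h2dec : a22 ≤ a21)
    (h3pos : 0 < a32) (h3dec : a32 ≤ a31)
    (hv1 : 0 ≤ v1) (hv2 : 0 ≤ v2) (hv3 : 0 ≤ v3)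
    (hb1 : 0 ≤ b1) (hb2 : 0 ≤ b2) (hb3 : 0 ≤ b3)
    (hp1 : p1 = max (a21 * b2) (a31 * b3))
    (hp2 : p2 = a32 * b3)
    -- bidder 1 wins slot 1, bidder 2 wins slot 2
    (hwin1 : a11 * b1 ≥ p1) (hwin2 : a22 * b2 ≥ p2)
    -- global envy-freeness
    (gef12 : a11 * v1 - p1 ≥ a12 * v1 - p2)
    (gef10 : a11 * v1 - p1 ≥ 0)
    (gef21 : a22 * v2 - p2 ≥ a21 * v2 - p1)
    (gef20 : a22 * v2 - p2 ≥ 0)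
    (gef31 : (0 : ℝ) ≥ a31 * v3 - p1)
    (gef32 : (0 : ℝ) ≥ a32 * v3 - p2) :
    (a31 - a32) * v3 ≤ (a11 - a12) * v1 := by
  have hb : v3 ≤ b3 := by nlinarith [gef32]
  have h1 : a31 * b3 ≤ p1 := by rw [hp1]; exact le_max_right _ _
  nlinarith [mul_le_mul_of_nonneg_left hb (by linarith : (0:ℝ) ≤ a31 - a32)]
end

section
/- In a two-slot setting with n ≥ 2 bidders, values v_i ≥ 0, click-through-rates α_{i,1} ≥ α_{i,2} > 0, where bids never exceed values (b_i ≤ v_i), let 1 and 2 be the winners of slots 1 and 2 in the efficient allocation. Then in any pure-strategy equilibrium allocation, either (a) the allocation is the efficient one (1,2), or (b) slot 2 goes to bidder 1 and slot 1 goes to argmax_{i ≠ 1} α_{i,1}v_i, or (c) slot 1 goes to bidder 2 and slot 2 goes to argmax_{i ≠ 2} α_{i,2}v_i. -/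
open Finset

/-- Per-impression price of slot 1 (index 0): the highest slot-1 score among
bidders other than the slot-1 winner. -/
noncomputable def price1 {n : ℕ} (α : Fin n → Fin 2 → ℝ) (b : Fin n → ℝ)
    (w1 : Fin n) : ℝ :=
  if h : (Finset.univ.erase w1).Nonempty then
    (Finset.univ.erase w1).sup' h (fun i => α i 0 * b i)
  else 0

/-- Per-impression price of slot 2 (index 1): the highest slot-2 score among
bidders other than the two winners. -/
noncomputable def price2 {n : ℕ} (α : Fin n → Fin 2 → ℝ) (b : Fin n → ℝ)
    (w1 w2 : Fin n) : ℝ :=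
  if h : ((Finset.univ.erase w1).erase w2).Nonempty then
    ((Finset.univ.erase w1).erase w2).sup' h (fun i => α i 1 * b i)
  else 0

/-- `(w1, w2)` is a possible outcome of the iterated second-price auction on bids `b`:
`w1` maximizes the slot-1 score, and `w2` maximizes the slot-2 score among the rest. -/
def Outcome {n : ℕ} (α : Fin n → Fin 2 → ℝ) (b : Fin n → ℝ) (w1 w2 : Fin n) : Prop :=
  w1 ≠ w2 ∧
  (∀ i, α i 0 * b i ≤ α w1 0 * b w1) ∧
  (∀ i, i ≠ w1 → α i 1 * b i ≤ α w2 1 * b w2)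

/-- Utility of bidder `i` under outcome `(w1, w2)` with bids `b` and true values `v`. -/
noncomputable def util {n : ℕ} (α : Fin n → Fin 2 → ℝ) (v b : Fin n → ℝ)
    (w1 w2 i : Fin n) : ℝ :=
  if i = w1 then α i 0 * v i - price1 α b w1
  else if i = w2 then α i 1 * v i - price2 α b w1 w2
  else 0

lemma loser_slot1_bound {n : ℕ}
    (α : Fin n → Fin 2 → ℝ) (v b : Fin n → ℝ)
    (w1 w2 : Fin n) (hout : Outcome α b w1 w2)
    (heq : ∀ i : Fin n, ∀ b' : Fin n → ℝ,
      (∀ j, j ≠ i → b' j = b j) → b' i ≤ v i →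
      ∀ w1' w2', Outcome α b' w1' w2' →
        util α v b' w1' w2' i ≤ util α v b w1 w2 i)
    (i : Fin n) (hi1 : i ≠ w1) (hi2 : i ≠ w2) :
    α i 0 * v i ≤ α w1 0 * b w1 := by
  by_contra hlt
  push_neg at hlt
  set b' := Function.update b i (v i) with hb'
  have hb'i : b' i = v i := Function.update_self _ _ _
  have hb'j : ∀ j, j ≠ i → b' j = b j := fun j hj => Function.update_of_ne hj _ _
  have hne : (Finset.univ.erase i).Nonempty :=
    ⟨w1, Finset.mem_erase.mpr ⟨hi1.symm, Finset.mem_univ _⟩⟩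
  obtain ⟨m, hm, hms⟩ := Finset.exists_mem_eq_sup' hne (fun j => α j 1 * b' j)
  have hmi : m ≠ i := (Finset.mem_erase.mp hm).1
  have hOut : Outcome α b' i m := by
    refine ⟨hmi.symm, ?_, ?_⟩
    · intro j
      rcases eq_or_ne j i with rfl | hj
      · exact le_refl _
      · rw [hb'j j hj, hb'i]
        exact le_trans (hout.2.1 j) hlt.le
    · intro j hj
      have hjm : j ∈ Finset.univ.erase i := Finset.mem_erase.mpr ⟨hj, Finset.mem_univ _⟩
      have := Finset.le_sup' (fun j => α j 1 * b' j) hjm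
      exact le_trans this (le_of_eq hms)
  have hle := heq i b' hb'j hb'i.le i m hOut
  have hu0 : util α v b w1 w2 i = 0 := by
    unfold util; rw [if_neg hi1, if_neg hi2]
  have hp : price1 α b' i ≤ α w1 0 * b w1 := by
    unfold price1
    rw [dif_pos hne]
    apply Finset.sup'_le
    intro j hjm
    rw [hb'j j (Finset.mem_erase.mp hjm).1]
    exact hout.2.1 j
  have hu1 : util α v b' i m i = α i 0 * v i - price1 α b' i := by
    unfold util; rw [if_pos rfl]
  rw [hu0, hu1] at hle
  linarith

lemma loser_slot2_contra {n : ℕ}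
    (α : Fin n → Fin 2 → ℝ) (v b : Fin n → ℝ)
    (hpos : ∀ i, 0 < α i 1) (hnob : ∀ i, b i ≤ v i)
    (w1 w2 : Fin n) (hout : Outcome α b w1 w2)
    (heq : ∀ i : Fin n, ∀ b' : Fin n → ℝ,
      (∀ j, j ≠ i → b' j = b j) → b' i ≤ v i →
      ∀ w1' w2', Outcome α b' w1' w2' →
        util α v b' w1' w2' i ≤ util α v b w1 w2 i)
    (i : Fin n) (hi1 : i ≠ w1) (hi2 : i ≠ w2)
    (hti : α w2 1 * v w2 < α i 1 * v i) : False := by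
  have hL1 := loser_slot1_bound α v b w1 w2 hout heq i hi1 hi2
  set b' := Function.update b i (v i) with hb'
  have hb'i : b' i = v i := Function.update_self _ _ _
  have hb'j : ∀ j, j ≠ i → b' j = b j := fun j hj => Function.update_of_ne hj _ _
  have hw2b : α w2 1 * b w2 ≤ α w2 1 * v w2 :=
    mul_le_mul_of_nonneg_left (hnob w2) (hpos w2).le
  have hOut : Outcome α b' w1 i := by
    refine ⟨hi1.symm, ?_, ?_⟩
    · intro j
      rw [hb'j w1 (Ne.symm hi1)]
      rcases eq_or_ne j i with rfl | hj
      · rw [hb'i]; exact hL1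
      · rw [hb'j j hj]; exact hout.2.1 j
    · intro j hj
      rcases eq_or_ne j i with rfl | hji
      · exact le_refl _
      · rw [hb'j j hji, hb'i]
        exact le_trans (hout.2.2 j hj) (le_trans hw2b hti.le)
  have hle := heq i b' hb'j hb'i.le w1 i hOut
  have hu0 : util α v b w1 w2 i = 0 := by
    unfold util; rw [if_neg hi1, if_neg hi2]
  have hne2 : ((Finset.univ.erase w1).erase i).Nonempty := by
    refine ⟨w2, Finset.mem_erase.mpr ⟨?_, Finset.mem_erase.mpr ⟨hout.1.symm, Finset.mem_univ _⟩⟩⟩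
    intro h; rw [h] at hti; exact lt_irrefl _ hti
  have hp : price2 α b' w1 i ≤ α w2 1 * v w2 := by
    unfold price2
    rw [dif_pos hne2]
    apply Finset.sup'_le
    intro j hjm
    obtain ⟨hji, hjw1⟩ := Finset.mem_erase.mp hjm
    rw [hb'j j hji]
    exact le_trans (hout.2.2 j (Finset.mem_erase.mp hjw1).1) hw2b
  have hu1 : util α v b' w1 i i = α i 1 * v i - price2 α b' w1 i := by
    unfold util; rw [if_neg hi1, if_pos rfl]
  rw [hu0, hu1] at hle
  linarith

/-- with no overbidding, the only possible equilibrium allocations are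
the efficient one (e1,e2), or (argmax_{i≠e1} α_{i,1}v_i, e1), or (e2, argmax_{i≠e2} α_{i,2}v_i). -/
theorem stmt7 (n : ℕ) (hn : 2 ≤ n)
    (α : Fin n → Fin 2 → ℝ) (v b : Fin n → ℝ)
    (hpos : ∀ i, 0 < α i 1) (hdec : ∀ i, α i 1 ≤ α i 0)
    (hv : ∀ i, 0 ≤ v i) (hnob : ∀ i, b i ≤ v i)
    (e1 e2 : Fin n) (hene : e1 ≠ e2)
    (heff : ∀ i j : Fin n, i ≠ j → (i ≠ e1 ∨ j ≠ e2) →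
      α i 0 * v i + α j 1 * v j < α e1 0 * v e1 + α e2 1 * v e2)
    (w1 w2 : Fin n) (hout : Outcome α b w1 w2)
    (heq : ∀ i : Fin n, ∀ b' : Fin n → ℝ,
      (∀ j, j ≠ i → b' j = b j) → b' i ≤ v i →
      ∀ w1' w2', Outcome α b' w1' w2' →
        util α v b' w1' w2' i ≤ util α v b w1 w2 i) :
    (w1 = e1 ∧ w2 = e2) ∨
    (w2 = e1 ∧ w1 ≠ e1 ∧ ∀ i, i ≠ e1 → α i 0 * v i ≤ α w1 0 * v w1) ∨
    (w1 = e2 ∧ w2 ≠ e2 ∧ ∀ i, i ≠ e2 → α i 1 * v i ≤ α w2 1 * v w2) := by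
  have ha0 : ∀ i, (0:ℝ) ≤ α i 0 := fun i => le_trans (hpos i).le (hdec i)
  by_cases hw1e1 : w1 = e1
  · by_cases hw2e2 : w2 = e2
    · exact Or.inl ⟨hw1e1, hw2e2⟩
    · exfalso
      subst hw1e1
      have he2w2 : e2 ≠ w2 := fun h => hw2e2 h.symm
      have hti : α w2 1 * v w2 < α e2 1 * v e2 := by
        have := heff w1 w2 hout.1 (Or.inr hw2e2)
        linarith
      exact loser_slot2_contra α v b hpos hnob w1 w2 hout heq e2 hene.symm he2w2 hti
  · by_cases hw2e1 : w2 = e1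
    · refine Or.inr (Or.inl ⟨hw2e1, hw1e1, ?_⟩)
      intro i hi
      rcases eq_or_ne i w1 with rfl | hiw1
      · exact le_refl _
      · have hiw2 : i ≠ w2 := by rw [hw2e1]; exact hi
        have := loser_slot1_bound α v b w1 w2 hout heq i hiw1 hiw2
        exact le_trans this (mul_le_mul_of_nonneg_left (hnob w1) (ha0 w1))
    · by_cases hw1e2 : w1 = e2
      · have hw2ne2 : w2 ≠ e2 := by rw [← hw1e2]; exact hout.1.symm
        refine Or.inr (Or.inr ⟨hw1e2, hw2ne2, ?_⟩)
        intro i hi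
        by_contra hlt
        push_neg at hlt
        rcases eq_or_ne i w2 with rfl | hiw2
        · exact lt_irrefl _ hlt
        · have hiw1 : i ≠ w1 := by rw [hw1e2]; exact hi
          exact loser_slot2_contra α v b hpos hnob w1 w2 hout heq i hiw1 hiw2 hlt
      · exfalso
        have he1 := loser_slot1_bound α v b w1 w2 hout heq e1
          (fun h => hw1e1 h.symm) (fun h => hw2e1 h.symm)
        have hb1 : α w1 0 * b w1 ≤ α w1 0 * v w1 :=
          mul_le_mul_of_nonneg_left (hnob w1) (ha0 w1)
        have := heff w1 e2 hw1e2 (Or.inl hw1e1)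
        linarith
end

section
/- In a two-slot, n-bidder setting (n ≥ 2) with values v_i ≥ 0 and weakly decreasing click-through-rates α_{i,1} ≥ α_{i,2} > 0, suppose bids satisfy b_i ≤ v_i and the equilibrium allocation gives slot 1 to j = argmax_{i ≠ 1} α_{i,1}v_i and slot 2 to bidder 1 (the efficient winner of slot 1), with bidder 1 paying p_2 ≥ 0 per-impression and facing a price p_{1,1} ≤ α_{j,1}v_j to win slot 1. If the equilibrium condition α_{1,1}v_1 − p_{1,1} ≤ α_{1,2}v_1 − p_2 holds, and α_{2,2}v_2 ≤ α_{j,1}v_j, then (α_{1,1}v_1 + α_{2,2}v_2)/(α_{j,1}v_j + α_{1,2}v_1) ≤ 2. -/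
/-- price-of-anarchy bound for the inefficient equilibrium (j,1). -/
theorem stmt8 (a11 a12 a21 a22 aj1 aj2 v1 v2 vj p2 p11 : ℝ)
    (h1pos : 0 < a12) (h1dec : a12 ≤ a11)
    (h2pos : 0 < a22) (h2dec : a22 ≤ a21)
    (hjpos : 0 < aj2) (hjdec : aj2 ≤ aj1)
    (hv1 : 0 ≤ v1) (hv2 : 0 ≤ v2) (hvj : 0 ≤ vj)
    (hp2 : 0 ≤ p2)
    (hp11 : p11 ≤ aj1 * vj)
    (heqm : a11 * v1 - p11 ≤ a12 * v1 - p2)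
    (hle : a22 * v2 ≤ aj1 * vj)
    (hden : 0 < aj1 * vj + a12 * v1) :
    (a11 * v1 + a22 * v2) / (aj1 * vj + a12 * v1) ≤ 2 := by
  rw [div_le_iff₀ hden]
  nlinarith [mul_nonneg hvj (le_trans hjpos.le hjdec), mul_nonneg hv1 h1pos.le]
end

section
/- In a two-slot, n-bidder setting (n ≥ 2) with b_i ≤ v_i and α_{i,1} ≥ α_{i,2} > 0, suppose the equilibrium allocation gives slot 1 to bidder 2 and slot 2 to k = argmax_{i ≠ 2} α_{i,2}v_i, where 1 and 2 are the respective efficient winners of slots 1 and 2. If α_{1,2}v_1 ≤ α_{k,2}v_k (bidder 1 cannot profitably take slot 2) and α_{1,1}v_1 ≤ α_{2,1}v_2 (bidder 1 cannot profitably take slot 1), then (α_{1,1}v_1 + α_{2,2}v_2)/(α_{2,1}v_2 + α_{k,2}v_k) ≤ 2, assuming α_{2,1}v_2 > 0. -/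
/-- price-of-anarchy bound for the inefficient equilibrium (2,k). -/
theorem stmt9 (a11 a12 a21 a22 ak1 ak2 v1 v2 vk : ℝ)
    (h1pos : 0 < a12) (h1dec : a12 ≤ a11)
    (h2pos : 0 < a22) (h2dec : a22 ≤ a21)
    (hkpos : 0 < ak2) (hkdec : ak2 ≤ ak1)
    (hv1 : 0 ≤ v1) (hv2 : 0 ≤ v2) (hvk : 0 ≤ vk)
    (hslot2 : a12 * v1 ≤ ak2 * vk)
    (hslot1 : a11 * v1 ≤ a21 * v2)
    (hden : 0 < a21 * v2) :
    (a11 * v1 + a22 * v2) / (a21 * v2 + ak2 * vk) ≤ 2 := by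
  have hk : 0 ≤ ak2 * vk := mul_nonneg hkpos.le hvk
  rw [div_le_iff₀ (by linarith)]
  nlinarith [mul_le_mul_of_nonneg_right h2dec hv2]
end

section
/- In a three-bidder, two-slot setting with positive values and click-through-rates α_{i,1} ≥ α_{i,2} > 0, assume the efficient allocation is (1,2) and α_{2,1}/α_{2,2} < α_{3,1}/α_{3,2}. Define b_2 = (α_{3,2}/α_{2,2})·v_3 and b_3 = (α_{2,1}/α_{2,2})·(α_{3,2}/α_{3,1})·v_3. Then: (i) b_3 < v_3 (bidder 3 underbids); (ii) α_{2,1}b_2 = α_{3,1}b_3 (tie for slot 1 between bidders 2 and 3); (iii) α_{2,2}b_2 > α_{3,2}b_3 (bidder 2 wins slot 2); (iv) α_{3,2}b_3 ≤ α_{2,2}v_2 and b_2 ≤ v_2. -/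
/-- properties of the equilibrium bids b2, b3 in the case
α21/α22 < α31/α32. -/
theorem stmt16 (a11 a12 a21 a22 a31 a32 v1 v2 v3 : ℝ)
    (h1pos : 0 < a12) (h1dec : a12 ≤ a11)
    (h2pos : 0 < a22) (h2dec : a22 ≤ a21)
    (h3pos : 0 < a32) (h3dec : a32 ≤ a31)
    (hv1 : 0 < v1) (hv2 : 0 < v2) (hv3 : 0 < v3)
    -- efficiency of (1,2):
    (heff21 : a21 * v2 + a12 * v1 < a11 * v1 + a22 * v2)
    (heff13 : a11 * v1 + a32 * v3 < a11 * v1 + a22 * v2)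
    (heff23 : a21 * v2 + a32 * v3 < a11 * v1 + a22 * v2)
    (heff31 : a31 * v3 + a12 * v1 < a11 * v1 + a22 * v2)
    (heff32 : a31 * v3 + a22 * v2 < a11 * v1 + a22 * v2)
    (hratio : a21 / a22 < a31 / a32) :
    (a21 / a22) * (a32 / a31) * v3 < v3 ∧
    a21 * ((a32 / a22) * v3) = a31 * ((a21 / a22) * (a32 / a31) * v3) ∧
    a22 * ((a32 / a22) * v3) > a32 * ((a21 / a22) * (a32 / a31) * v3) ∧
    a32 * ((a21 / a22) * (a32 / a31) * v3) ≤ a22 * v2 ∧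
    (a32 / a22) * v3 ≤ v2 := by
  have h31 : 0 < a31 := lt_of_lt_of_le h3pos h3dec
  have hcross : a21 * a32 < a31 * a22 := by
    have := (div_lt_div_iff₀ h2pos h3pos).mp hratio
    linarith
  have hlt1 : (a21 / a22) * (a32 / a31) < 1 := by
    rw [div_mul_div_comm, div_lt_one (by positivity)]
    linarith
  have hi : (a21 / a22) * (a32 / a31) * v3 < v3 := by
    nlinarith [hlt1, hv3]
  have heq : a21 * ((a32 / a22) * v3) = a31 * ((a21 / a22) * (a32 / a31) * v3) := by
    field_simp
  have h32v : a32 * v3 < a22 * v2 := by linarith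
  refine ⟨hi, heq, ?_, ?_, ?_⟩
  · have : a32 * ((a21 / a22) * (a32 / a31) * v3) < a32 * v3 :=
      mul_lt_mul_of_pos_left hi h3pos
    have h22 : a22 * ((a32 / a22) * v3) = a32 * v3 := by field_simp
    linarith
  · have : a32 * ((a21 / a22) * (a32 / a31) * v3) < a32 * v3 :=
      mul_lt_mul_of_pos_left hi h3pos
    linarith
  · rw [div_mul_eq_mul_div, div_le_iff₀ h2pos]
    linarith
end

section
/- Let p be minimal envy-free (Walrasian) prices for a unit-demand assignment of n bidders to n slots, where bidder i is assigned slot i and v_{i,j} denotes bidder i's value for slot j, so v_{i,i} − p_i ≥ v_{i,j} − p_j for all i, j. Build the indifference graph G with an edge (i,j) whenever v_{i,i} − p_i = v_{i,j} − p_j. Then every node of G is reachable from some node j with p_j = 0. (Equivalently: if S is the set of nodes not reachable from any zero-price node, then S = ∅, since otherwise uniformly lowering prices on S by a small δ > 0 would yield envy-free prices strictly below p, contradicting minimality.) -/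
/-- for minimal envy-free (Walrasian) prices, every node of the
indifference graph is reachable from some zero-price node. -/
theorem stmt18 (n : ℕ) (v : Fin n → Fin n → ℝ) (p : Fin n → ℝ)
    (hp : ∀ j, 0 ≤ p j)
    (hef : ∀ i j, v i i - p i ≥ v i j - p j)
    (hmin : ∀ p' : Fin n → ℝ, (∀ j, 0 ≤ p' j) →
      (∀ i j, v i i - p' i ≥ v i j - p' j) → (∀ j, p' j ≤ p j) → p' = p) :
    ∀ i, ∃ j, p j = 0 ∧
      Relation.ReflTransGen (fun a c => v a a - p a = v a c - p c) j i := by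
  classical
  intro i
  by_contra h
  push_neg at h
  set E : Fin n → Fin n → Prop := fun a c => v a a - p a = v a c - p c with hE
  set S : Finset (Fin n) :=
    Finset.univ.filter (fun x => ¬ ∃ j, p j = 0 ∧ Relation.ReflTransGen E j x) with hS
  have hiS : i ∈ S := by
    simp only [hS, Finset.mem_filter, Finset.mem_univ, true_and]
    rintro ⟨j, hj0, hjr⟩
    exact h j hj0 hjr
  have hSpos : ∀ x ∈ S, 0 < p x := by
    intro x hx
    rcases lt_or_eq_of_le (hp x) with h1 | h1
    · exact h1
    · exfalso
      simp only [hS, Finset.mem_filter, Finset.mem_univ, true_and] at hx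
      exact hx ⟨x, h1.symm, Relation.ReflTransGen.refl⟩
  have hslack : ∀ a, a ∉ S → ∀ x ∈ S, v a x - p x < v a a - p a := by
    intro a ha x hx
    rcases lt_or_eq_of_le (hef a x) with h1 | h1
    · exact h1
    · exfalso
      simp only [hS, Finset.mem_filter, Finset.mem_univ, true_and, not_not] at ha
      simp only [hS, Finset.mem_filter, Finset.mem_univ, true_and] at hx
      obtain ⟨j, hj0, hjr⟩ := ha
      exact hx ⟨j, hj0, hjr.tail h1.symm⟩
  -- define δ
  have hSne : S.Nonempty := ⟨i, hiS⟩
  set T : Finset (Fin n × Fin n) := (Sᶜ) ×ˢ S with hT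
  set δ2 : ℝ := if hT2 : T.Nonempty
      then T.inf' hT2 (fun q => (v q.1 q.1 - p q.1) - (v q.1 q.2 - p q.2)) else 1 with hδ2
  set δ : ℝ := min (S.inf' hSne p) δ2 with hδ
  have hδ2pos : 0 < δ2 := by
    rw [hδ2]
    split_ifs with hT2
    · rw [Finset.lt_inf'_iff]
      rintro ⟨a, x⟩ hq
      rw [hT, Finset.mem_product, Finset.mem_compl] at hq
      have := hslack a hq.1 x hq.2
      linarith
    · norm_num
  have hδpos : 0 < δ := by
    rw [hδ, lt_min_iff]
    refine ⟨?_, hδ2pos⟩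
    rw [Finset.lt_inf'_iff]
    exact fun x hx => hSpos x hx
  have hδle : ∀ x ∈ S, δ ≤ p x := fun x hx =>
    le_trans (min_le_left _ _) (Finset.inf'_le _ hx)
  have hδslack : ∀ a, a ∉ S → ∀ x ∈ S, δ ≤ (v a a - p a) - (v a x - p x) := by
    intro a ha x hx
    have hm : (a, x) ∈ T := by
      rw [hT, Finset.mem_product, Finset.mem_compl]; exact ⟨ha, hx⟩
    have hT2 : T.Nonempty := ⟨(a, x), hm⟩
    have h4 : δ ≤ δ2 := min_le_right _ _
    rw [hδ2, dif_pos hT2] at h4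
    exact le_trans h4 (Finset.inf'_le _ hm)
  set p' : Fin n → ℝ := fun x => if x ∈ S then p x - δ else p x with hp'
  have h1 : ∀ j, 0 ≤ p' j := by
    intro j
    show 0 ≤ if j ∈ S then p j - δ else p j
    split_ifs with hj
    · linarith [hδle j hj]
    · exact hp j
  have h2 : ∀ a b, v a a - p' a ≥ v a b - p' b := by
    intro a b
    show v a a - (if a ∈ S then p a - δ else p a) ≥ v a b - (if b ∈ S then p b - δ else p b)
    by_cases ha : a ∈ S <;> by_cases hb : b ∈ S <;> simp only [ha, hb, if_true, if_false]
    · linarith [hef a b]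
    · linarith [hef a b, hδpos]
    · linarith [hδslack a ha b hb]
    · exact hef a b
  have h3 : ∀ j, p' j ≤ p j := by
    intro j
    show (if j ∈ S then p j - δ else p j) ≤ p j
    split_ifs
    · linarith
    · exact le_refl _
  have := hmin p' h1 h2 h3
  have h5 := congrFun this i
  simp only [hp', hiS, if_true] at h5
  linarith
end
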